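/- arXiv:0906.1840 — 3 statements merged into one kernel-verified Lean document; each statement's English description precedes it below -/
import Mathlib

section
/- Let d ≥ 3 and let Y₁,...,Yₙ be independent with Yᵢ ~ Exp((d-2)i + d), and T = ∑ᵢ Yᵢ. Then for any q ≥ n and ℓ > 0, P(T ≥ (1/(d-2))·log q + ℓ) ≤ C·e^{-dℓ} for a constant C depending only on d (one may take C = e^{2d/(d-2)} · q^{d/(d-2)} / q^{d/(d-2)}, i.e., C = e^{2d/(d-2)}). -/
/-!
Chernoff bound at the exponent `d`. With `c = d - 2`, the moment generating function of
`Exp(c i + d)` at `d` is `1 + (d / c) / i`, so by independence and `1 + x ≤ eˣ` the one of `T`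
is at most `exp ((d / c) H_n) ≤ exp ((d / c) (1 + log n))`. Markov's inequality for `e^{d T}`
then gives `exp (d / c - d ℓ + (d / c) (log n - log q))`, and `log n ≤ log q`.
-/

open MeasureTheory ProbabilityTheory Real Set

lemma exponentialPDFReal_mul_exp_mul (r t x : ℝ) :
    exponentialPDFReal r x * exp (t * x) =
      (Ici 0).indicator (fun x => r * exp ((t - r) * x)) x := by
  by_cases hx : 0 ≤ x
  · simp only [exponentialPDFReal, gammaPDFReal, hx, if_true, Gamma_one, rpow_one, sub_self,
      rpow_zero, div_one, mul_one, indicator_of_mem (mem_Ici.mpr hx)]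
    rw [mul_assoc, ← exp_add]
    ring_nf
  · simp [exponentialPDFReal, gammaPDFReal, hx]

lemma mgf_id_expMeasure {r t : ℝ} (hr : 0 < r) (ht : t < r) :
    mgf id (expMeasure r) t = r / (r - t) := by
  have hdens : gammaPDF 1 r = fun x => ENNReal.ofReal (exponentialPDFReal r x) := rfl
  rw [mgf, expMeasure, gammaMeasure, hdens, integral_withDensity_eq_integral_toReal_smul
    (measurable_exponentialPDFReal r).ennreal_ofReal (.of_forall fun _ => ENNReal.ofReal_lt_top)]
  simp_rw [ENNReal.toReal_ofReal (exponentialPDFReal_nonneg hr _), smul_eq_mul, id,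
    exponentialPDFReal_mul_exp_mul]
  rw [integral_indicator measurableSet_Ici, integral_Ici_eq_integral_Ioi, integral_const_mul,
    integral_exp_mul_Ioi (by linarith) 0,
    mul_zero, exp_zero, neg_div, ← div_neg, neg_sub, mul_one_div]

lemma mgf_eq_of_map_eq_expMeasure {Ω : Type*} [MeasurableSpace Ω] {μ : Measure Ω} {X : Ω → ℝ}
    {r t : ℝ} (hX : AEMeasurable X μ) (hmap : μ.map X = expMeasure r) (hr : 0 < r) (ht : t < r) :
    mgf X μ t = r / (r - t) := by
  rw [← mgf_id_map hX, hmap, mgf_id_expMeasure hr ht]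

lemma measure_ge_le_exp_mul_of_mgf_le {Ω : Type*} [MeasurableSpace Ω] {μ : Measure Ω}
    [IsProbabilityMeasure μ] {X : Ω → ℝ} {t M : ℝ} (ε : ℝ) (ht : 0 ≤ t)
    (hpos : 0 < mgf X μ t) (hM : mgf X μ t ≤ M) :
    μ {ω | ε ≤ X ω} ≤ ENNReal.ofReal (exp (-t * ε) * M) := by
  rw [ENNReal.le_ofReal_iff_toReal_le (measure_ne_top _ _)
    (mul_pos (exp_pos _) (hpos.trans_le hM)).le]
  calc _ ≤ exp (-t * ε) * mgf X μ t := measure_ge_le_exp_mul_mgf ε ht (mgf_pos_iff.mp hpos)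
    _ ≤ exp (-t * ε) * M := by gcongr

lemma prod_one_add_div_le_exp {a : ℝ} (ha : 0 ≤ a) (n : ℕ) :
    ∏ i ∈ Finset.Icc 1 n, (1 + a / i) ≤ exp (a * (1 + log n)) := by
  calc ∏ i ∈ Finset.Icc 1 n, (1 + a / i) ≤ ∏ i ∈ Finset.Icc 1 n, exp (a * (i : ℝ)⁻¹) := by
        gcongr with i hi
        rw [add_comm, ← div_eq_mul_inv]; exact add_one_le_exp _
    _ = exp (a * harmonic n) := by
        rw [← exp_sum, ← Finset.mul_sum, harmonic_eq_sum_Icc, Rat.cast_sum]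
        simp only [Rat.cast_inv, Rat.cast_natCast]
    _ ≤ exp (a * (1 + log n)) := by gcongr; exact harmonic_le_one_add_log n

lemma mgf_sum_eq_prod_of_map_eq_expMeasure {Ω : Type*} [MeasurableSpace Ω] {μ : Measure Ω}
    {Y : ℕ → Ω → ℝ} (hmeas : ∀ i, Measurable (Y i)) (hindep : iIndepFun Y μ) {c t : ℝ}
    (hc : 0 < c) (ht : 0 ≤ t) {n : ℕ}
    (hdist : ∀ i ∈ Finset.Icc 1 n, μ.map (Y i) = expMeasure (c * i + t)) :
    mgf (∑ i ∈ Finset.Icc 1 n, Y i) μ t = ∏ i ∈ Finset.Icc 1 n, (1 + t / c / i) := by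
  rw [hindep.mgf_sum hmeas]
  refine Finset.prod_congr rfl fun i hi => ?_
  have hi0 : (0 : ℝ) < i := by exact_mod_cast (Finset.mem_Icc.mp hi).1
  rw [mgf_eq_of_map_eq_expMeasure (hmeas i).aemeasurable (hdist i hi) (by positivity)
    (by nlinarith)]
  field_simp
  ring

theorem tail_bound_exploration_time_general
    {Ω : Type*} [MeasurableSpace Ω] (μ : Measure Ω) [IsProbabilityMeasure μ]
    (d : ℕ) (hd : 3 ≤ d) (n : ℕ) (hn : 1 ≤ n) (Y : ℕ → Ω → ℝ)
    (hmeas : ∀ i, Measurable (Y i))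
    (hindep : iIndepFun Y μ)
    (hdist : ∀ i ∈ Finset.Icc 1 n, Measure.map (Y i) μ = expMeasure (((d : ℝ) - 2) * i + d))
    (q : ℝ) (hq : (n : ℝ) ≤ q) (ℓ : ℝ) :
    μ {ω | (1 / ((d : ℝ) - 2)) * Real.log q + ℓ ≤ ∑ i ∈ Finset.Icc 1 n, Y i ω}
      ≤ ENNReal.ofReal (Real.exp (2 * d / ((d : ℝ) - 2)) * Real.exp (-(d : ℝ) * ℓ)) := by
  have hc : (0 : ℝ) < d - 2 := by
    have : (3 : ℝ) ≤ d := by exact_mod_cast hd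
    linarith
  have hmgf := mgf_sum_eq_prod_of_map_eq_expMeasure hmeas hindep hc d.cast_nonneg hdist
  have hpos : 0 < mgf (∑ i ∈ Finset.Icc 1 n, Y i) μ d :=
    hmgf ▸ Finset.prod_pos fun i _ => by positivity
  have hmgf_le := hmgf ▸ prod_one_add_div_le_exp (a := d / (d - 2)) (by positivity) n
  have hlog : log n ≤ log q := log_le_log (Nat.cast_pos.mpr hn) hq
  calc _ ≤ ENNReal.ofReal
          (exp (-d * (1 / (d - 2) * log q + ℓ)) * exp (d / (d - 2) * (1 + log n))) := by
        simpa only [Finset.sum_apply] using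
          measure_ge_le_exp_mul_of_mgf_le _ d.cast_nonneg hpos hmgf_le
    _ ≤ _ := by
        refine ENNReal.ofReal_le_ofReal ?_
        rw [← exp_add, ← exp_add, exp_le_exp]
        have hk : (0 : ℝ) ≤ d / (d - 2) := by positivity
        linarith [mul_le_mul_of_nonneg_left hlog hk,
          show (2 : ℝ) * d / (d - 2) = 2 * (d / (d - 2)) by ring,
          show -(d : ℝ) * (1 / (d - 2) * log q + ℓ) + d / (d - 2) * (1 + log n)
            = d / (d - 2) + (d / (d - 2) * log n - d / (d - 2) * log q) - d * ℓ by ring]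

/-- For independent `Yᵢ ~ Exp((d-2)i + d)`, `1 ≤ i ≤ n`, and `T = ∑ᵢ Yᵢ`:
for any `q ≥ n` and `ℓ > 0`, `P(T ≥ (1/(d-2)) log q + ℓ) ≤ C e^{-dℓ}`
with `C = e^{2d/(d-2)}`. -/
theorem tail_bound_exploration_time
    {Ω : Type*} [MeasurableSpace Ω] (μ : Measure Ω) [IsProbabilityMeasure μ]
    (d : ℕ) (hd : 3 ≤ d) (n : ℕ) (hn : 1 ≤ n) (Y : ℕ → Ω → ℝ)
    (hmeas : ∀ i, Measurable (Y i))
    (hindep : iIndepFun Y μ)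
    (hdist : ∀ i ∈ Finset.Icc 1 n, Measure.map (Y i) μ = expMeasure (((d : ℝ) - 2) * i + d))
    (q : ℝ) (hq : (n : ℝ) ≤ q) (ℓ : ℝ) (hℓ : 0 < ℓ) :
    μ {ω | (1 / ((d : ℝ) - 2)) * Real.log q + ℓ ≤ ∑ i ∈ Finset.Icc 1 n, Y i ω}
      ≤ ENNReal.ofReal (Real.exp (2 * d / ((d : ℝ) - 2)) * Real.exp (-(d : ℝ) * ℓ)) :=
  tail_bound_exploration_time_general μ d hd n hn Y hmeas hindep hdist q hq ℓ
end

section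
/- Let 0 < ε < 1/2 and μ = 1 - ε. For every integer k ≥ ⌈1/ε⌉, there exist constants 0 < c₁ ≤ c₂ (independent of ε and k, valid for all ε small enough) such that c₁ · ε · e^{-2kε} ≤ ((1/μ) - 1)/((1/μ)^{k+1} - 1) ≤ c₂ · ε · e^{-kε}. -/
open Real

/-! Multiplying numerator and denominator by `μ^(k+1)` turns the quantity into
`ε μ^k / (1 - μ^(k+1))`. Since `k ε ≥ 1`, `μ^(k+1) ≤ e^(-1) < 1/2`, so the denominator lies
in `[1/2, 1]`, and `e^(-2ε) ≤ 1 - ε ≤ e^(-ε)` gives `e^(-2kε) ≤ μ^k ≤ e^(-kε)`. -/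

lemma one_sub_pow_le_exp_neg_mul {ε : ℝ} (hε : ε ≤ 1) (k : ℕ) :
    (1 - ε) ^ k ≤ exp (-k * ε) :=
  calc (1 - ε) ^ k ≤ exp (-ε) ^ k := pow_le_pow_left₀ (by linarith) (one_sub_le_exp_neg ε) k
    _ = exp (-k * ε) := by rw [← exp_nat_mul]; ring_nf

lemma exp_neg_two_mul_le_one_sub {ε : ℝ} (hε₀ : 0 ≤ ε) (hε : ε ≤ 1 / 2) :
    exp (-2 * ε) ≤ 1 - ε := by
  rw [neg_mul, exp_neg, inv_le_comm₀ (exp_pos _) (by linarith)]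
  calc (1 - ε)⁻¹ ≤ 1 + 2 * ε := by
        rw [inv_le_iff_one_le_mul₀ (by linarith)]; nlinarith
    _ ≤ exp (2 * ε) := by linarith [add_one_le_exp (2 * ε)]

lemma exp_neg_two_mul_le_one_sub_pow {ε : ℝ} (hε₀ : 0 ≤ ε) (hε : ε ≤ 1 / 2) (k : ℕ) :
    exp (-2 * k * ε) ≤ (1 - ε) ^ k :=
  calc exp (-2 * k * ε) = exp (-2 * ε) ^ k := by rw [← exp_nat_mul]; ring_nf
    _ ≤ (1 - ε) ^ k :=
      pow_le_pow_left₀ (exp_pos _).le (exp_neg_two_mul_le_one_sub hε₀ hε) k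

lemma geom_ratio_eq {a : ℝ} (ha : a ≠ 0) (k : ℕ) :
    (1 / a - 1) / ((1 / a) ^ (k + 1) - 1) = (1 - a) * a ^ k / (1 - a ^ (k + 1)) := by
  rw [← mul_div_mul_right _ _ (pow_ne_zero (k + 1) ha)]
  congr 1
  · field_simp
    ring
  · rw [sub_mul, ← mul_pow, one_div_mul_cancel ha, one_pow, one_mul]

lemma one_sub_mul_pow_le_geom_ratio {a : ℝ} (ha₀ : 0 < a) (ha₁ : a < 1) (k : ℕ) :
    (1 - a) * a ^ k ≤ (1 / a - 1) / ((1 / a) ^ (k + 1) - 1) := by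
  rw [geom_ratio_eq ha₀.ne']
  have hpow : a ^ (k + 1) < 1 := pow_lt_one₀ ha₀.le ha₁ (Nat.succ_ne_zero k)
  exact le_div_self (mul_nonneg (by linarith) (pow_nonneg ha₀.le k)) (by linarith)
    (by linarith [pow_pos ha₀ (k + 1)])

lemma geom_ratio_le_two_mul {a : ℝ} (ha₀ : 0 < a) (ha₁ : a ≤ 1) {k : ℕ}
    (hpow : a ^ (k + 1) ≤ 1 / 2) :
    (1 / a - 1) / ((1 / a) ^ (k + 1) - 1) ≤ 2 * ((1 - a) * a ^ k) := by
  rw [geom_ratio_eq ha₀.ne', div_le_iff₀ (by linarith)]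
  have hnum : 0 ≤ (1 - a) * a ^ k := mul_nonneg (by linarith) (pow_nonneg ha₀.le k)
  calc (1 - a) * a ^ k = 2 * ((1 - a) * a ^ k) * (1 / 2) := by ring
    _ ≤ 2 * ((1 - a) * a ^ k) * (1 - a ^ (k + 1)) := by gcongr; linarith

/-- For `μ = 1 - ε` and `k ≥ ⌈1/ε⌉`, the reciprocal resistance
`((1/μ)-1)/((1/μ)^{k+1}-1)` is of order `ε·e^{-kε}`: there are constants
`0 < c₁ ≤ c₂`, valid for all small enough `ε`, with
`c₁ ε e^{-2kε} ≤ ((1/μ)-1)/((1/μ)^{k+1}-1) ≤ c₂ ε e^{-kε}`. -/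
theorem reciprocal_resistance_order :
    ∃ c₁ c₂ ε₀ : ℝ, 0 < c₁ ∧ c₁ ≤ c₂ ∧ 0 < ε₀ ∧
      ∀ ε : ℝ, 0 < ε → ε < 1 / 2 → ε < ε₀ →
        ∀ k : ℕ, (⌈1 / ε⌉₊ : ℕ) ≤ k →
          c₁ * ε * Real.exp (-2 * k * ε)
              ≤ (1 / (1 - ε) - 1) / ((1 / (1 - ε)) ^ (k + 1) - 1) ∧
            (1 / (1 - ε) - 1) / ((1 / (1 - ε)) ^ (k + 1) - 1)
              ≤ c₂ * ε * Real.exp (-(k : ℝ) * ε) := by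
  refine ⟨1, 2, 1, one_pos, one_le_two, one_pos, fun ε hε hε₂ _ k hk => ?_⟩
  have hkε : 1 ≤ k * ε := by
    have := Nat.ceil_le.mp hk
    rwa [div_le_iff₀ hε] at this
  have hpow : (1 - ε) ^ (k + 1) ≤ 1 / 2 :=
    calc (1 - ε) ^ (k + 1) ≤ exp (-(k + 1 : ℕ) * ε) :=
          one_sub_pow_le_exp_neg_mul (by linarith) _
      _ ≤ exp (-1) := exp_le_exp.mpr (by push_cast; nlinarith)
      _ ≤ 1 / 2 := exp_neg_one_lt_half.le
  constructor
  · calc 1 * ε * exp (-2 * k * ε) ≤ (1 - (1 - ε)) * (1 - ε) ^ k := by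
          rw [sub_sub_cancel, one_mul]
          gcongr
          exact exp_neg_two_mul_le_one_sub_pow hε.le hε₂.le k
      _ ≤ _ := one_sub_mul_pow_le_geom_ratio (by linarith) (by linarith) k
  · calc _ ≤ 2 * ((1 - (1 - ε)) * (1 - ε) ^ k) :=
          geom_ratio_le_two_mul (by linarith) (by linarith) hpow
      _ ≤ 2 * ε * exp (-k * ε) := by
          rw [sub_sub_cancel, ← mul_assoc]
          gcongr
          exact one_sub_pow_le_exp_neg_mul (by linarith) k
end

section
/- Let Y be a random variable taking values y ≥ 3 with P(Y = 3) = 3N₃'/D and P(Y = k) = kN_k/D for k ≥ 4, where D = 3N₃' + ∑_{j≥4} jN_j, and suppose N_k ≤ c(3ε)^k n / k! for all k ≥ 4 and N₃' ≥ (4 - o(1))ε³n/3 · 3, i.e., 3N₃' ≥ (4-o(1))ε³n. Then there is a constant c' > 1 such that P(Y - 2 = k) ≤ c'(3ε)^{k-1}/(k+1)! for all k ≥ 2, and consequently E[e^{λ(Y-2)}] ≤ c'·e^{λ}·exp(3ε·e^{λ}) for all λ > 0. -/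
open MeasureTheory ProbabilityTheory Real

open scoped ENNReal Nat

/-!
Since `D ≥ 3N₃' ≥ 3ε³n`, the hypothesis on `N_k` gives
`P(Y = m + 3) = (m + 3) N_{m+3} / D ≤ 9c (3ε)^m / (m + 2)!` for `m ≥ 1`, and trivially for `m = 0`.
So `Y - 3` is dominated termwise by `9c` times the Poisson-like weights `(3ε)^m / m!`, and
`E[e^{λ(Y-3)}] = ∑ₘ e^{λm} P(Y = m + 3) ≤ 9c ∑ₘ (3ε e^λ)^m / m! = 9c exp(3ε e^λ)`.
-/

lemma Real.hasSum_pow_div_factorial (x : ℝ) : HasSum (fun k : ℕ => x ^ k / k !) (exp x) := by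
  rw [exp_eq_exp_ℝ]
  exact NormedSpace.expSeries_div_hasSum_exp x

lemma ENNReal.tsum_ofReal_mul_pow_div_factorial {C x : ℝ} (hC : 0 ≤ C) (hx : 0 ≤ x) :
    ∑' k : ℕ, ENNReal.ofReal (C * x ^ k / k !) = ENNReal.ofReal (C * exp x) := by
  have hsum := (Real.hasSum_pow_div_factorial x).mul_left C
  simp only [← mul_div_assoc] at hsum
  rw [← hsum.tsum_eq, ENNReal.ofReal_tsum_of_nonneg (fun k => by positivity) hsum.summable]

theorem MeasureTheory.lintegral_comp_eq_tsum_of_forall_mem_range {Ω : Type*} [MeasurableSpace Ω]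
    (μ : Measure Ω) {Y : Ω → ℝ} (hY : Measurable Y) {v : ℕ → ℝ} (hv : Function.Injective v)
    (hval : ∀ ω, ∃ k, Y ω = v k) (f : ℝ → ℝ≥0∞) :
    ∫⁻ ω, f (Y ω) ∂μ = ∑' k, f (v k) * μ {ω | Y ω = v k} := by
  have hcover : (⋃ k, {ω | Y ω = v k}) = Set.univ :=
    Set.eq_univ_of_forall fun ω => Set.mem_iUnion.2 (hval ω)
  have hmeas : ∀ k, MeasurableSet {ω | Y ω = v k} := fun k => hY (measurableSet_singleton _)
  have hdisj : Pairwise (Function.onFun Disjoint fun k => {ω | Y ω = v k}) :=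
    fun i j hij => Set.disjoint_left.2 fun ω hi hj => hij (hv (hi.symm.trans hj))
  rw [← setLIntegral_univ, ← hcover, lintegral_iUnion hmeas hdisj]
  refine tsum_congr fun k => ?_
  rw [setLIntegral_congr_fun (hmeas k) fun ω (hω : Y ω = v k) => by rw [hω], setLIntegral_const]

theorem MeasureTheory.integral_exp_mul_sub_le_of_measure_le {Ω : Type*} [MeasurableSpace Ω]
    {μ : Measure Ω} {Y : Ω → ℝ} {s C a : ℝ} (hY : Measurable Y) (hval : ∀ ω, ∃ k : ℕ, Y ω = s + k)
    (hC : 0 ≤ C) (ha : 0 ≤ a) (hμ : ∀ k : ℕ, μ {ω | Y ω = s + k} ≤ ENNReal.ofReal (C * a ^ k / k !))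
    (l : ℝ) : ∫ ω, exp (l * (Y ω - s)) ∂μ ≤ C * exp (a * exp l) := by
  have hmeas : Measurable fun ω => exp (l * (Y ω - s)) := by fun_prop
  rw [integral_eq_lintegral_of_nonneg_ae (ae_of_all _ fun ω => (exp_pos _).le)
    hmeas.aestronglyMeasurable]
  refine ENNReal.toReal_le_of_le_ofReal (by positivity) ?_
  rw [lintegral_comp_eq_tsum_of_forall_mem_range μ hY (add_right_injective s |>.comp
    Nat.cast_injective) hval (fun y => ENNReal.ofReal (exp (l * (y - s)))),
    ← ENNReal.tsum_ofReal_mul_pow_div_factorial hC (by positivity)]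
  refine ENNReal.tsum_le_tsum fun k => ?_
  calc ENNReal.ofReal (exp (l * (s + k - s))) * μ {ω | Y ω = s + k}
      ≤ ENNReal.ofReal (exp l ^ k) * ENNReal.ofReal (C * a ^ k / k !) := by
        rw [add_sub_cancel_left, ← exp_nat_mul, mul_comm l]
        gcongr
        exact hμ k
    _ = ENNReal.ofReal (C * (a * exp l) ^ k / k !) := by
        rw [← ENNReal.ofReal_mul (by positivity)]
        ring_nf

lemma mul_div_le_of_le_mul_pow_div_factorial {ε n c D x : ℝ} (m : ℕ) (hε : 0 < ε) (hn : 0 < n)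
    (hc : 0 ≤ c) (hD : 3 * ε ^ 3 * n ≤ D) (hx : x ≤ c * (3 * ε) ^ (m + 3) * n / (m + 3)!) :
    (m + 3) * x / D ≤ 9 * c * (3 * ε) ^ m / (m + 2)! := by
  have hfact : ((m + 3)! : ℝ) = (m + 3) * (m + 2)! := by
    push_cast [Nat.factorial_succ]
    ring
  calc (m + 3) * x / D
      ≤ (m + 3) * (c * (3 * ε) ^ (m + 3) * n / (m + 3)!) / (3 * ε ^ 3 * n) := by
        gcongr
    _ = 9 * c * (3 * ε) ^ m / (m + 2)! := by
        rw [hfact]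
        field_simp
        ring

theorem degree_distribution_laplace_bound_general
    {Ω : Type*} [MeasurableSpace Ω] (μ : Measure Ω) [IsProbabilityMeasure μ]
    (Y : Ω → ℝ) (hY : Measurable Y)
    (ε n c : ℝ) (hε0 : 0 < ε) (hn : 0 < n) (hc : 1 < c)
    (N₃' : ℝ) (N : ℕ → ℝ) (hNpos : ∀ k, 0 ≤ N k)
    (hNk : ∀ k : ℕ, 4 ≤ k → N k ≤ c * (3 * ε) ^ k * n / (Nat.factorial k))
    (hN₃ : 3 * ε ^ 3 * n ≤ 3 * N₃')
    (hval : ∀ ω, Y ω = 3 ∨ ∃ k : ℕ, 4 ≤ k ∧ Y ω = k)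
    (hpk : ∀ k : ℕ, 4 ≤ k → μ {ω | Y ω = k}
      = ENNReal.ofReal ((k : ℝ) * N k /
          (3 * N₃' + ∑' j : ℕ, if 4 ≤ j then (j : ℝ) * N j else 0))) :
    ∃ c' : ℝ, 1 < c' ∧
      (∀ k : ℕ, 2 ≤ k →
        μ {ω | Y ω - 2 = k} ≤ ENNReal.ofReal (c' * (3 * ε) ^ (k - 1) / (Nat.factorial (k + 1)))) ∧
      (∀ l : ℝ, 0 < l →
        ∫ ω, Real.exp (l * (Y ω - 2)) ∂μ ≤ c' * Real.exp l * Real.exp (3 * ε * Real.exp l)) := by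
  have hD : 3 * ε ^ 3 * n ≤ 3 * N₃' + ∑' j : ℕ, if 4 ≤ j then (j : ℝ) * N j else 0 :=
    le_add_of_le_of_nonneg hN₃ (tsum_nonneg fun j => by have := hNpos j; split_ifs <;> positivity)
  have hprob : ∀ m : ℕ, 1 ≤ m →
      μ {ω | Y ω = 3 + m} ≤ ENNReal.ofReal (9 * c * (3 * ε) ^ m / (m + 2)!) := fun m hm => by
    have h := hpk (m + 3) (by omega)
    push_cast at h
    rw [add_comm, h]
    exact ENNReal.ofReal_le_ofReal <| mul_div_le_of_le_mul_pow_div_factorial m hε0 hn (by linarith) hD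
      (hNk (m + 3) (by omega))
  refine ⟨9 * c, by linarith, fun k hk => ?_, fun l _ => ?_⟩
  · obtain ⟨m, rfl⟩ : ∃ m, k = m + 2 := ⟨k - 2, by omega⟩
    convert hprob (m + 1) (by omega) using 3
    · ext ω
      push_cast
      constructor <;> intro h <;> linarith
    · simp
  · have hY_eq : ∀ ω, ∃ k : ℕ, Y ω = 3 + k := fun ω => by
      rcases hval ω with h | ⟨k, hk, h⟩
      · exact ⟨0, by simp [h]⟩
      · exact ⟨k - 3, by rw [h, Nat.cast_sub (by omega)]; push_cast; ring⟩
    have hbound : ∀ m : ℕ, μ {ω | Y ω = 3 + m} ≤ ENNReal.ofReal (9 * c * (3 * ε) ^ m / m !) := by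
      intro m
      rcases Nat.eq_zero_or_pos m with rfl | hm
      · refine prob_le_one.trans (ENNReal.one_le_ofReal.2 ?_)
        norm_num
        linarith
      · refine (hprob m hm).trans (ENNReal.ofReal_le_ofReal ?_)
        gcongr
        exact m.le_add_right 2
    calc ∫ ω, exp (l * (Y ω - 2)) ∂μ = exp l * ∫ ω, exp (l * (Y ω - 3)) ∂μ := by
          rw [← integral_const_mul]
          congr with ω
          rw [← exp_add]
          ring_nf
      _ ≤ exp l * (9 * c * exp (3 * ε * exp l)) := by
          gcongr
          exact integral_exp_mul_sub_le_of_measure_le hY hY_eq (by linarith) (by positivity) hbound l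
      _ = 9 * c * exp l * exp (3 * ε * exp l) := by ring

/-- For the degree distribution `P(Y=3) = 3N₃'/D`, `P(Y=k) = kN_k/D` (`k ≥ 4`) with
`D = 3N₃' + ∑_{j≥4} jN_j`, if `N_k ≤ c(3ε)^k n/k!` for `k ≥ 4` and `3N₃' ≥ 3ε³n`, then
there is `c' > 1` with `P(Y-2 = k) ≤ c'(3ε)^{k-1}/(k+1)!` for all `k ≥ 2`, and
`E[e^{λ(Y-2)}] ≤ c' e^{λ} exp(3ε e^{λ})` for all `λ > 0`. -/
theorem degree_distribution_laplace_bound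
    {Ω : Type*} [MeasurableSpace Ω] (μ : Measure Ω) [IsProbabilityMeasure μ]
    (Y : Ω → ℝ) (hY : Measurable Y)
    (ε n c : ℝ) (hε0 : 0 < ε) (hε1 : ε < 1 / 3) (hn : 0 < n) (hc : 1 < c)
    (N₃' : ℝ) (N : ℕ → ℝ) (hNpos : ∀ k, 0 ≤ N k) (hN₃pos : 0 ≤ N₃')
    (hNk : ∀ k : ℕ, 4 ≤ k → N k ≤ c * (3 * ε) ^ k * n / (Nat.factorial k))
    (hN₃ : 3 * ε ^ 3 * n ≤ 3 * N₃')
    (hval : ∀ ω, Y ω = 3 ∨ ∃ k : ℕ, 4 ≤ k ∧ Y ω = k)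
    (hp3 : μ {ω | Y ω = 3}
      = ENNReal.ofReal (3 * N₃' /
          (3 * N₃' + ∑' j : ℕ, if 4 ≤ j then (j : ℝ) * N j else 0)))
    (hpk : ∀ k : ℕ, 4 ≤ k → μ {ω | Y ω = k}
      = ENNReal.ofReal ((k : ℝ) * N k /
          (3 * N₃' + ∑' j : ℕ, if 4 ≤ j then (j : ℝ) * N j else 0))) :
    ∃ c' : ℝ, 1 < c' ∧
      (∀ k : ℕ, 2 ≤ k →
        μ {ω | Y ω - 2 = k} ≤ ENNReal.ofReal (c' * (3 * ε) ^ (k - 1) / (Nat.factorial (k + 1)))) ∧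
      (∀ l : ℝ, 0 < l →
        ∫ ω, Real.exp (l * (Y ω - 2)) ∂μ ≤ c' * Real.exp l * Real.exp (3 * ε * Real.exp l)) :=
  degree_distribution_laplace_bound_general μ Y hY ε n c hε0 hn hc N₃' N hNpos hNk hN₃ hval hpk
end
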